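/- Let g : ℝ → ℝ be g(p) = ∫_{−∞}^{0} {1 + e^{−2η−2p}(1−e^{nη})^{1/k}}^{−1/2} dη with n ≥ 3, 2 ≤ k ≤ n. For fixed real numbers p_a ≥ p_b, define F(p) = (1/2)∫_{p_b−p}^{0}{1 + e^{−2η−2p}(1−e^{nη})^{1/k}}^{−1/2} dη + (1/2)∫_{p_a−p}^{0}{1 + e^{−2η−2p}(1−e^{nη})^{1/k}}^{−1/2} dη for p ≥ p_a. Then F is continuous, F(p) → T(a,b,c₁,c₂) := (1/2)∫_{p_b−p_a}^{0}{1+e^{−2η−2p_a}(1−e^{nη})^{1/k}}^{−1/2} dη as p → p_a⁺, and F(p) → ∞ as p → ∞; consequently, for every T > T(a,b,c₁,c₂) there exists p ≥ p_a with F(p) = T. -/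
import Mathlib

open Real MeasureTheory Filter intervalIntegral

/-- The integrand `{1 + e^{−2η − 2p}(1 − e^{nη})^{1/k}}^{−1/2}`. -/
noncomputable def Fintegrand (n k : ℕ) (p η : ℝ) : ℝ :=
  (1 + Real.exp (-2 * η - 2 * p) * (1 - Real.exp ((n : ℝ) * η)) ^ ((1 : ℝ) / k))
    ^ (-(1 : ℝ) / 2)

/-- `F(p) = (1/2)∫_{p_b−p}^0 … dη + (1/2)∫_{p_a−p}^0 … dη`. -/
noncomputable def Ffun (n k : ℕ) (pa pb p : ℝ) : ℝ :=
  (1 / 2) * (∫ η in (pb - p)..0, Fintegrand n k p η)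
  + (1 / 2) * (∫ η in (pa - p)..0, Fintegrand n k p η)

/-- `T(a,b,c₁,c₂) = (1/2)∫_{p_b−p_a}^0 {1+e^{−2η−2p_a}(1−e^{nη})^{1/k}}^{−1/2} dη`. -/
noncomputable def Tabc (n k : ℕ) (pa pb : ℝ) : ℝ :=
  (1 / 2) * ∫ η in (pb - pa)..0, Fintegrand n k pa η

lemma rpow_inv_nonneg (k : ℕ) (hk2 : 2 ≤ k) (x : ℝ) : 0 ≤ x ^ ((1:ℝ)/k) := by
  rcases le_or_gt 0 x with h | h
  · exact Real.rpow_nonneg h _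
  · rw [Real.rpow_def_of_neg h]
    apply mul_nonneg (le_of_lt (Real.exp_pos _))
    apply Real.cos_nonneg_of_mem_Icc
    constructor
    · have h0 : (0:ℝ) ≤ 1/k*π := mul_nonneg (div_nonneg zero_le_one (Nat.cast_nonneg k)) Real.pi_pos.le
      linarith [Real.pi_pos]
    · have hk : (2:ℝ) ≤ k := by exact_mod_cast hk2
      have : (1:ℝ)/k ≤ 1/2 := by
        apply div_le_div_of_nonneg_left (by norm_num) (by norm_num) hk
      calc (1:ℝ)/k * π ≤ 1/2 * π := by nlinarith [Real.pi_pos]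
        _ = π/2 := by ring

lemma base_ge_one (n k : ℕ) (hk2 : 2 ≤ k) (p η : ℝ) :
    1 ≤ 1 + Real.exp (-2 * η - 2 * p) * (1 - Real.exp ((n : ℝ) * η)) ^ ((1 : ℝ) / k) := by
  nlinarith [rpow_inv_nonneg k hk2 (1 - Real.exp ((n : ℝ) * η)), Real.exp_pos (-2 * η - 2 * p)]

lemma Fintegrand_cont (n k : ℕ) (hk2 : 2 ≤ k) :
    Continuous (Function.uncurry (fun p η => Fintegrand n k p η)) := by
  have hk0 : (0:ℝ) < (1:ℝ)/k := by
    have : (0:ℝ) < k := by exact_mod_cast lt_of_lt_of_le two_pos hk2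
    positivity
  have hin : Continuous (fun x : ℝ => x ^ ((1:ℝ)/k)) := by
    rw [continuous_iff_continuousAt]
    intro x
    exact Real.continuousAt_rpow_const x _ (Or.inr hk0.le)
  have hbase : Continuous (fun q : ℝ × ℝ =>
      1 + Real.exp (-2 * q.2 - 2 * q.1) * (1 - Real.exp ((n : ℝ) * q.2)) ^ ((1 : ℝ) / k)) :=
    continuous_const.add ((Real.continuous_exp.comp (by fun_prop)).mul
      (hin.comp (continuous_const.sub (Real.continuous_exp.comp (by fun_prop)))))
  rw [continuous_iff_continuousAt]
  intro q
  have : ContinuousAt (fun x : ℝ => x ^ (-(1:ℝ)/2))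
      (1 + Real.exp (-2 * q.2 - 2 * q.1) * (1 - Real.exp ((n : ℝ) * q.2)) ^ ((1 : ℝ) / k)) := by
    apply Real.continuousAt_rpow_const _ _ (Or.inl _)
    have := base_ge_one n k hk2 q.1 q.2
    linarith
  show ContinuousAt ((fun x : ℝ => x ^ (-(1:ℝ)/2)) ∘ (fun q : ℝ × ℝ =>
      1 + Real.exp (-2 * q.2 - 2 * q.1) * (1 - Real.exp ((n : ℝ) * q.2)) ^ ((1 : ℝ) / k))) q
  exact ContinuousAt.comp (g := fun x : ℝ => x ^ (-(1:ℝ)/2)) this hbase.continuousAt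

lemma Ffun_cont (n k : ℕ) (hk2 : 2 ≤ k) (pa pb : ℝ) : Continuous (Ffun n k pa pb) := by
  have key : ∀ q : ℝ, Continuous fun p => ∫ η in (q - p)..0, Fintegrand n k p η := by
    intro q
    have h := intervalIntegral.continuous_parametric_intervalIntegral_of_continuous
        (μ := volume) (f := fun p η => Fintegrand n k p η) (Fintegrand_cont n k hk2)
        (s := fun p : ℝ => q - p) (continuous_const.sub continuous_id) (a₀ := 0)
    have heq : (fun p => ∫ η in (q - p)..0, Fintegrand n k p η)
        = fun p => -∫ η in (0:ℝ)..(q - p), Fintegrand n k p η := by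
      funext p
      rw [intervalIntegral.integral_symm]
    rw [heq]
    exact h.neg
  exact (continuous_const.mul (key pb)).add (continuous_const.mul (key pa))

/-- for `p_a ≥ p_b`, the function `F` is continuous on `[p_a, ∞)`, tends to
`T(a,b,c₁,c₂)` as `p → p_a⁺`, tends to `∞` as `p → ∞`; consequently every `T > T(a,b,c₁,c₂)`
is attained: there is `p ≥ p_a` with `F(p) = T`. -/
theorem stmt18 (n k : ℕ) (hn : 3 ≤ n) (hk2 : 2 ≤ k) (hkn : k ≤ n)
    (pa pb : ℝ) (hab : pb ≤ pa) :
    ContinuousOn (Ffun n k pa pb) (Set.Ici pa)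
    ∧ Tendsto (Ffun n k pa pb) (nhdsWithin pa (Set.Ioi pa)) (nhds (Tabc n k pa pb))
    ∧ Tendsto (Ffun n k pa pb) atTop atTop
    ∧ ∀ T : ℝ, Tabc n k pa pb < T → ∃ p : ℝ, pa ≤ p ∧ Ffun n k pa pb p = T := by
  have hFc := Ffun_cont n k hk2 pa pb
  have hFpa : Ffun n k pa pb pa = Tabc n k pa pb := by
    unfold Ffun Tabc
    simp
  -- uniform lower bound for the integrand on [q - p, 0], q ∈ {pa, pb}
  have hlow : ∀ (q p η : ℝ), q - p ≤ η → η ≤ 0 →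
      (1 + Real.exp (-2*q)) ^ (-(1:ℝ)/2) ≤ Fintegrand n k p η := by
    intro q p η hη hη0
    have hnη : (n:ℝ) * η ≤ 0 := mul_nonpos_of_nonneg_of_nonpos (Nat.cast_nonneg n) hη0
    have hexp1 : Real.exp ((n:ℝ) * η) ≤ 1 := Real.exp_le_one_iff.2 hnη
    unfold Fintegrand
    apply Real.rpow_le_rpow_of_nonpos
    · linarith [base_ge_one n k hk2 p η]
    · have hc : (1 - Real.exp ((n : ℝ) * η)) ^ ((1 : ℝ) / k) ≤ 1 :=
        Real.rpow_le_one (by linarith) (by linarith [Real.exp_pos ((n:ℝ)*η)])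
          (div_nonneg zero_le_one (Nat.cast_nonneg k))
      have he : Real.exp (-2 * η - 2 * p) ≤ Real.exp (-2*q) := by
        apply Real.exp_le_exp.2
        linarith
      nlinarith [Real.exp_pos (-2 * η - 2 * p), Real.exp_pos (-2*q),
        rpow_inv_nonneg k hk2 (1 - Real.exp ((n : ℝ) * η))]
    · norm_num
  have hpos : ∀ q : ℝ, 0 < (1 + Real.exp (-2*q)) ^ (-(1:ℝ)/2) := by
    intro q
    apply Real.rpow_pos_of_pos
    positivity
  have hFint : ∀ p a : ℝ, IntervalIntegrable (Fintegrand n k p) volume a 0 := by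
    intro p a
    exact ((Fintegrand_cont n k hk2).comp (Continuous.prodMk_right p)).intervalIntegrable a 0
  -- lower bound: for p ≥ pa, Ffun p ≥ (1/2) * m * (p - pa)
  have hbound : ∀ p : ℝ, pa ≤ p →
      (1/2) * ((1 + Real.exp (-2*pa)) ^ (-(1:ℝ)/2)) * (p - pa) ≤ Ffun n k pa pb p := by
    intro p hp
    have h1 : (0:ℝ) ≤ ∫ η in (pb - p)..0, Fintegrand n k p η := by
      apply intervalIntegral.integral_nonneg (by linarith)
      intro u hu
      exact le_of_lt (Real.rpow_pos_of_pos (by linarith [base_ge_one n k hk2 p u]) _)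
    have h2 : ((1 + Real.exp (-2*pa)) ^ (-(1:ℝ)/2)) * (p - pa)
        ≤ ∫ η in (pa - p)..0, Fintegrand n k p η := by
      have := intervalIntegral.integral_mono_on (μ := volume) (a := pa - p) (b := 0)
        (f := fun _ => (1 + Real.exp (-2*pa)) ^ (-(1:ℝ)/2)) (g := Fintegrand n k p)
        (by linarith) (intervalIntegrable_const) (hFint p _)
        (fun x hx => hlow pa p x hx.1 hx.2)
      rw [intervalIntegral.integral_const] at this
      calc ((1 + Real.exp (-2*pa)) ^ (-(1:ℝ)/2)) * (p - pa)
          = (0 - (pa - p)) • ((1 + Real.exp (-2*pa)) ^ (-(1:ℝ)/2)) := by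
            simp [smul_eq_mul]; ring
        _ ≤ _ := this
    unfold Ffun
    nlinarith [hpos pa]
  have h3 : Tendsto (Ffun n k pa pb) atTop atTop := by
    apply tendsto_atTop_mono' atTop (f₁ := fun p =>
      (1/2) * ((1 + Real.exp (-2*pa)) ^ (-(1:ℝ)/2)) * (p - pa))
    · filter_upwards [eventually_ge_atTop pa] with p hp using hbound p hp
    · apply Tendsto.const_mul_atTop (mul_pos (by norm_num) (hpos pa))
      exact tendsto_atTop_add_const_right atTop (-pa) tendsto_id
  refine ⟨hFc.continuousOn, ?_, h3, ?_⟩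
  · have h := (hFc.tendsto pa).mono_left (nhdsWithin_le_nhds (s := Set.Ioi pa))
    rwa [hFpa] at h
  · intro T hT
    obtain ⟨b, hb⟩ := ((h3.eventually_ge_atTop T).and (eventually_ge_atTop pa)).exists
    have hmem : T ∈ Set.Icc (Ffun n k pa pb pa) (Ffun n k pa pb b) :=
      ⟨by rw [hFpa]; exact hT.le, hb.1⟩
    obtain ⟨p, hp, hFp⟩ := intermediate_value_Icc hb.2 hFc.continuousOn hmem
    exact ⟨p, hp.1, hFp⟩
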